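/- arXiv:2209.05574 — 2 statements merged into one kernel-verified Lean document; each statement's English description precedes it below -/
import Mathlib

section
/- Let F, B, K, W, g, d, a, p0, p1 be real numbers with d > 0, a > 0, p0 ≥ 0, p1 ≥ 0, and suppose p̃ := (F + B·W)²·p1 − (F − B·K)²·p0 satisfies p̃ > max{d, a}. Fix any real x ≠ 0 and let Ξ¹(x) be the 2×2 matrix with entries m11 = p1·((F + B·W)·x)², m12 = m11 − a·x², m21 = p0·((F − B·K)·x)² + d·x², m22 = m11 + (d − a)·x². Then the state-independent strategies y* = ((p̃ − a)/p̃, a/p̃) and z* = (d/p̃, (p̃ − d)/p̃) lie in Δ₂ and form a mixed saddle point of Ξ¹(x), and the value satisfies g·x² + y*ᵀ Ξ¹(x) z* = p1ₖ·x², where p1ₖ := g + (F + B·W)²·p1 − a + d·a/p̃. -/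
open Matrix

/-- The probability simplex in ℝ²: vectors (β, 1-β) with β ∈ [0,1]. -/
def Δ₂ : Set (Fin 2 → ℝ) := {y | 0 ≤ y 0 ∧ 0 ≤ y 1 ∧ y 0 + y 1 = 1}

/-- Payoff yᵀ M z for a 2×2 matrix game. -/
def payoff (M : Matrix (Fin 2) (Fin 2) ℝ) (y z : Fin 2 → ℝ) : ℝ :=
  y 0 * M 0 0 * z 0 + y 0 * M 0 1 * z 1 + y 1 * M 1 0 * z 0 + y 1 * M 1 1 * z 1

/-- Mixed saddle point of M: row player minimizes, column player maximizes. -/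
def IsMixedSaddle (M : Matrix (Fin 2) (Fin 2) ℝ) (ys zs : Fin 2 → ℝ) : Prop :=
  ys ∈ Δ₂ ∧ zs ∈ Δ₂ ∧
    (∀ z ∈ Δ₂, payoff M ys z ≤ payoff M ys zs) ∧
    (∀ y ∈ Δ₂, payoff M ys zs ≤ payoff M y zs)

/-!
Both strategies are equalizers: against `y*` every column of `Ξ¹(x)` yields the same expected
cost, and against `z*` every row does, so neither player gains by deviating. Writing
`p̃ = (F + B W)² p1 − (F − B K)² p0`, the matrix is `!![m, m − a c; m − (p̃ − d) c, m + (d − a) c]`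
with `m = m11` and `c = x²`, and the common value is `m − a c + d a c / p̃`.
-/

lemma payoff_eq_of_mem_Δ₂_right {M : Matrix (Fin 2) (Fin 2) ℝ} {y z : Fin 2 → ℝ} {v : ℝ}
    (hz : z ∈ Δ₂) (h0 : y 0 * M 0 0 + y 1 * M 1 0 = v) (h1 : y 0 * M 0 1 + y 1 * M 1 1 = v) :
    payoff M y z = v := by
  obtain ⟨-, -, hz⟩ := hz
  calc payoff M y z = (y 0 * M 0 0 + y 1 * M 1 0) * z 0 + (y 0 * M 0 1 + y 1 * M 1 1) * z 1 := by
        unfold payoff; ring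
    _ = v := by rw [h0, h1, ← mul_add, hz, mul_one]

lemma payoff_eq_of_mem_Δ₂_left {M : Matrix (Fin 2) (Fin 2) ℝ} {y z : Fin 2 → ℝ} {v : ℝ}
    (hy : y ∈ Δ₂) (h0 : M 0 0 * z 0 + M 0 1 * z 1 = v) (h1 : M 1 0 * z 0 + M 1 1 * z 1 = v) :
    payoff M y z = v := by
  obtain ⟨-, -, hy⟩ := hy
  calc payoff M y z = y 0 * (M 0 0 * z 0 + M 0 1 * z 1) + y 1 * (M 1 0 * z 0 + M 1 1 * z 1) := by
        unfold payoff; ring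
    _ = v := by rw [h0, h1, ← add_mul, hy, one_mul]

theorem isMixedSaddle_of_equalizer {M : Matrix (Fin 2) (Fin 2) ℝ} {ys zs : Fin 2 → ℝ} {v : ℝ}
    (hys : ys ∈ Δ₂) (hzs : zs ∈ Δ₂) (hrow : ∀ z ∈ Δ₂, payoff M ys z = v)
    (hcol : ∀ y ∈ Δ₂, payoff M y zs = v) : IsMixedSaddle M ys zs :=
  ⟨hys, hzs, fun z hz => (hrow z hz).trans (hrow zs hzs).symm |>.le,
    fun y hy => (hrow zs hzs).trans (hcol y hy).symm |>.le⟩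

lemma vec_div_mem_Δ₂ {u w p : ℝ} (hu : 0 ≤ u) (hw : 0 ≤ w) (hp : 0 < p) (hsum : u + w = p) :
    ![u / p, w / p] ∈ Δ₂ :=
  ⟨div_nonneg hu hp.le, div_nonneg hw hp.le, by
    simp only [cons_val_zero, cons_val_one]
    rw [← add_div, hsum, div_self hp.ne']⟩

section Equalizer

variable {m n a d c p : ℝ}

lemma payoff_equalizer_row (hp : p ≠ 0) (hn : n = m - (p - d) * c) {z : Fin 2 → ℝ}
    (hz : z ∈ Δ₂) :
    payoff !![m, m - a * c; n, m + (d - a) * c] ![(p - a) / p, a / p] z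
      = m - a * c + d * a / p * c := by
  subst hn
  apply payoff_eq_of_mem_Δ₂_right hz <;>
  · simp only [cons_val_zero, cons_val_one, of_apply, cons_val', empty_val',
      cons_val_fin_one]
    field_simp
    ring

lemma payoff_equalizer_col (hp : p ≠ 0) (hn : n = m - (p - d) * c) {y : Fin 2 → ℝ}
    (hy : y ∈ Δ₂) :
    payoff !![m, m - a * c; n, m + (d - a) * c] y ![d / p, (p - d) / p]
      = m - a * c + d * a / p * c := by
  subst hn
  apply payoff_eq_of_mem_Δ₂_left hy <;>
  · simp only [cons_val_zero, cons_val_one, of_apply, cons_val', empty_val',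
      cons_val_fin_one]
    field_simp
    ring

end Equalizer

theorem stmt_8_general (F B K W g d a p0 p1 : ℝ) (hd : 0 < d) (ha : 0 < a)
    (hpt : (F + B * W) ^ 2 * p1 - (F - B * K) ^ 2 * p0 > max d a)
    (x : ℝ) :
    let pt : ℝ := (F + B * W) ^ 2 * p1 - (F - B * K) ^ 2 * p0
    let m11 : ℝ := p1 * ((F + B * W) * x) ^ 2
    let M : Matrix (Fin 2) (Fin 2) ℝ :=
      !![m11, m11 - a * x ^ 2;
         p0 * ((F - B * K) * x) ^ 2 + d * x ^ 2, m11 + (d - a) * x ^ 2]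
    let ys : Fin 2 → ℝ := ![(pt - a) / pt, a / pt]
    let zs : Fin 2 → ℝ := ![d / pt, (pt - d) / pt]
    ys ∈ Δ₂ ∧ zs ∈ Δ₂ ∧ IsMixedSaddle M ys zs ∧
    g * x ^ 2 + payoff M ys zs
      = (g + (F + B * W) ^ 2 * p1 - a + d * a / pt) * x ^ 2 := by
  intro pt m11 M ys zs
  have hdp : d < pt := (le_max_left d a).trans_lt hpt
  have hap : a < pt := (le_max_right d a).trans_lt hpt
  have hpt0 : 0 < pt := ha.trans hap
  have hn : p0 * ((F - B * K) * x) ^ 2 + d * x ^ 2 = m11 - (pt - d) * x ^ 2 := by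
    simp only [m11, pt]; ring
  have hys : ys ∈ Δ₂ := vec_div_mem_Δ₂ (sub_nonneg.2 hap.le) ha.le hpt0 (sub_add_cancel _ _)
  have hzs : zs ∈ Δ₂ := vec_div_mem_Δ₂ hd.le (sub_nonneg.2 hdp.le) hpt0 (add_sub_cancel _ _)
  have hrow : ∀ z ∈ Δ₂, payoff M ys z = m11 - a * x ^ 2 + d * a / pt * x ^ 2 :=
    fun _ hz => payoff_equalizer_row hpt0.ne' hn hz
  have hcol : ∀ y ∈ Δ₂, payoff M y zs = m11 - a * x ^ 2 + d * a / pt * x ^ 2 :=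
    fun _ hy => payoff_equalizer_col hpt0.ne' hn hy
  refine ⟨hys, hzs, isMixedSaddle_of_equalizer hys hzs hrow hcol, ?_⟩
  rw [hrow zs hzs]
  simp only [m11]
  ring

/-- scalar FlipDyn game, adversary-controlled state: the
state-independent strategies form a mixed saddle point of Ξ¹(x), with
quadratic value p1ₖ·x². -/
theorem stmt_8 (F B K W g d a p0 p1 : ℝ) (hd : 0 < d) (ha : 0 < a)
    (hp0 : 0 ≤ p0) (hp1 : 0 ≤ p1)
    (hpt : (F + B * W) ^ 2 * p1 - (F - B * K) ^ 2 * p0 > max d a)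
    (x : ℝ) (hx : x ≠ 0) :
    let pt : ℝ := (F + B * W) ^ 2 * p1 - (F - B * K) ^ 2 * p0
    let m11 : ℝ := p1 * ((F + B * W) * x) ^ 2
    let M : Matrix (Fin 2) (Fin 2) ℝ :=
      !![m11, m11 - a * x ^ 2;
         p0 * ((F - B * K) * x) ^ 2 + d * x ^ 2, m11 + (d - a) * x ^ 2]
    let ys : Fin 2 → ℝ := ![(pt - a) / pt, a / pt]
    let zs : Fin 2 → ℝ := ![d / pt, (pt - d) / pt]
    ys ∈ Δ₂ ∧ zs ∈ Δ₂ ∧ IsMixedSaddle M ys zs ∧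
    g * x ^ 2 + payoff M ys zs
      = (g + (F + B * W) ^ 2 * p1 - a + d * a / pt) * x ^ 2 :=
  stmt_8_general F B K W g d a p0 p1 hd ha hpt x
end

section
/- Let D, A be symmetric n×n real positive definite matrices, let P0, P1 be symmetric n×n real matrices, let B̃, W̃ be n×n real matrices, and fix a nonzero x ∈ ℝⁿ such that xᵀ P̃ x > xᵀ A x and xᵀ P̃ x > xᵀ D x, where P̃ := W̃ᵀ P1 W̃ − B̃ᵀ P0 B̃. Let Ξ¹(x) be the 2×2 matrix with entries m11 = xᵀ W̃ᵀ P1 W̃ x, m12 = m11 − xᵀ A x, m21 = xᵀ B̃ᵀ P0 B̃ x + xᵀ D x, m22 = m11 + xᵀ D x − xᵀ A x. Then, with β̂* := (xᵀ A x)/(xᵀ P̃ x) and γ̂* := 1 − (xᵀ D x)/(xᵀ P̃ x), the strategies y* = (1 − β̂*, β̂*) and z* = (1 − γ̂*, γ̂*) lie in Δ₂ and form a mixed saddle point of Ξ¹(x), and the value satisfies y*ᵀ Ξ¹(x) z* = xᵀ W̃ᵀ P1 W̃ x − xᵀ A x + (xᵀ D x)(xᵀ A x)/(xᵀ P̃ x).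 -/
open Matrix

/-
Each player's strategy makes the opponent indifferent: against `y*` both columns of Ξ¹(x) pay
the same, and against `z*` both rows cost the same. Then every reply earns the same payoff,
so neither player can improve, and `(y*, z*)` is a saddle point. Writing
`m = xᵀW̃ᵀP1W̃x`, `b = xᵀB̃ᵀP0B̃x`, `a = xᵀAx`, `d = xᵀDx`, one has `xᵀP̃x = m - b`, and the two
indifference conditions are linear equations in `β̂*` and `γ̂*` whose solutions are the stated
ones; positive definiteness of `A`, `D` together with `a, d < xᵀP̃x` puts them in `[0, 1]`.
-/

lemma vec_one_sub_mem_Δ₂ {t : ℝ} (h0 : 0 ≤ t) (h1 : t ≤ 1) : ![1 - t, t] ∈ Δ₂ :=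
  ⟨by simpa using h1, h0, by simp⟩

section Indifference

variable {M : Matrix (Fin 2) (Fin 2) ℝ} {y z : Fin 2 → ℝ} {v : ℝ}

lemma payoff_eq_of_cols_eq (h0 : y 0 * M 0 0 + y 1 * M 1 0 = v)
    (h1 : y 0 * M 0 1 + y 1 * M 1 1 = v) (hz : z ∈ Δ₂) : payoff M y z = v := by
  obtain ⟨-, -, hz⟩ := hz
  unfold payoff
  linear_combination z 0 * h0 + z 1 * h1 + v * hz

lemma payoff_eq_of_rows_eq (h0 : M 0 0 * z 0 + M 0 1 * z 1 = v)
    (h1 : M 1 0 * z 0 + M 1 1 * z 1 = v) (hy : y ∈ Δ₂) : payoff M y z = v := by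
  obtain ⟨-, -, hy⟩ := hy
  unfold payoff
  linear_combination y 0 * h0 + y 1 * h1 + v * hy

end Indifference

lemma isMixedSaddle_of_equalizers {M : Matrix (Fin 2) (Fin 2) ℝ} {ys zs : Fin 2 → ℝ} {v w : ℝ}
    (hys : ys ∈ Δ₂) (hzs : zs ∈ Δ₂)
    (hcol0 : ys 0 * M 0 0 + ys 1 * M 1 0 = v) (hcol1 : ys 0 * M 0 1 + ys 1 * M 1 1 = v)
    (hrow0 : M 0 0 * zs 0 + M 0 1 * zs 1 = w) (hrow1 : M 1 0 * zs 0 + M 1 1 * zs 1 = w) :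
    IsMixedSaddle M ys zs := by
  refine ⟨hys, hzs, fun z hz => ?_, fun y hy => ?_⟩
  · rw [payoff_eq_of_cols_eq hcol0 hcol1 hz, payoff_eq_of_cols_eq hcol0 hcol1 hzs]
  · rw [payoff_eq_of_rows_eq hrow0 hrow1 hy, payoff_eq_of_rows_eq hrow0 hrow1 hys]

/-- The game Ξ¹(x) in the scalars `m, b, a, d` above, with `q = xᵀP̃x`. -/
theorem isMixedSaddle_flipDyn_adversary {m b a d q : ℝ} (hq : m - b = q)
    (ha : 0 < a) (hd : 0 < d) (hqa : a < q) (hqd : d < q) :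
    let M : Matrix (Fin 2) (Fin 2) ℝ := !![m, m - a; b + d, m + d - a]
    let ys : Fin 2 → ℝ := ![1 - a / q, a / q]
    let zs : Fin 2 → ℝ := ![1 - (1 - d / q), 1 - d / q]
    IsMixedSaddle M ys zs ∧ payoff M ys zs = m - a + d * a / q := by
  intro M ys zs
  have hq0 : 0 < q := ha.trans hqa
  have hys : ys ∈ Δ₂ :=
    vec_one_sub_mem_Δ₂ (div_pos ha hq0).le ((div_lt_one hq0).mpr hqa).le
  have hzs : zs ∈ Δ₂ := vec_one_sub_mem_Δ₂
    (sub_nonneg.mpr ((div_lt_one hq0).mpr hqd).le) (sub_le_self _ (div_pos hd hq0).le)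
  have hcol0 : (1 - a / q) * m + a / q * (b + d) = m - a + d * a / q := by
    field_simp
    linear_combination -a * hq
  have hcol1 : (1 - a / q) * (m - a) + a / q * (m + d - a) = m - a + d * a / q := by
    field_simp
    ring
  have hrow0 : m * (1 - (1 - d / q)) + (m - a) * (1 - d / q) = m - a + d * a / q := by
    field_simp
    ring
  have hrow1 : (b + d) * (1 - (1 - d / q)) + (m + d - a) * (1 - d / q) = m - a + d * a / q := by
    field_simp
    linear_combination -d * hq
  exact ⟨isMixedSaddle_of_equalizers hys hzs hcol0 hcol1 hrow0 hrow1,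
    payoff_eq_of_cols_eq hcol0 hcol1 hzs⟩

theorem stmt_14_general {n : ℕ} (D A P0 P1 Bt Wt : Matrix (Fin n) (Fin n) ℝ)
    (hD : D.PosDef) (hA : A.PosDef)
    (x : Fin n → ℝ) (hx : x ≠ 0)
    (hA' : x ⬝ᵥ (Wtᵀ * P1 * Wt - Btᵀ * P0 * Bt) *ᵥ x > x ⬝ᵥ A *ᵥ x)
    (hD' : x ⬝ᵥ (Wtᵀ * P1 * Wt - Btᵀ * P0 * Bt) *ᵥ x > x ⬝ᵥ D *ᵥ x) :
    let qPt : ℝ := x ⬝ᵥ (Wtᵀ * P1 * Wt - Btᵀ * P0 * Bt) *ᵥ x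
    let m11 : ℝ := x ⬝ᵥ (Wtᵀ * P1 * Wt) *ᵥ x
    let M : Matrix (Fin 2) (Fin 2) ℝ :=
      !![m11, m11 - x ⬝ᵥ A *ᵥ x;
         x ⬝ᵥ (Btᵀ * P0 * Bt) *ᵥ x + x ⬝ᵥ D *ᵥ x,
         m11 + x ⬝ᵥ D *ᵥ x - x ⬝ᵥ A *ᵥ x]
    let β : ℝ := (x ⬝ᵥ A *ᵥ x) / qPt
    let γ : ℝ := 1 - (x ⬝ᵥ D *ᵥ x) / qPt
    let ys : Fin 2 → ℝ := ![1 - β, β]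
    let zs : Fin 2 → ℝ := ![1 - γ, γ]
    ys ∈ Δ₂ ∧ zs ∈ Δ₂ ∧ IsMixedSaddle M ys zs ∧
    payoff M ys zs = x ⬝ᵥ (Wtᵀ * P1 * Wt) *ᵥ x - x ⬝ᵥ A *ᵥ x +
      (x ⬝ᵥ D *ᵥ x) * (x ⬝ᵥ A *ᵥ x) / qPt := by
  intro qPt m11 M β γ ys zs
  have hq : m11 - x ⬝ᵥ (Btᵀ * P0 * Bt) *ᵥ x = qPt := by
    simp only [qPt, m11, sub_mulVec, dotProduct_sub]
  have ha : 0 < x ⬝ᵥ A *ᵥ x := by simpa using hA.dotProduct_mulVec_pos hx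
  have hd : 0 < x ⬝ᵥ D *ᵥ x := by simpa using hD.dotProduct_mulVec_pos hx
  obtain ⟨hsaddle, hvalue⟩ := isMixedSaddle_flipDyn_adversary hq ha hd hA' hD'
  exact ⟨hsaddle.1, hsaddle.2.1, hsaddle, hvalue⟩

/-- n-dimensional FlipDyn, adversary-controlled state: the given
strategies form a mixed saddle point of Ξ¹(x) with the stated value. -/
theorem stmt_14 {n : ℕ} (D A P0 P1 Bt Wt : Matrix (Fin n) (Fin n) ℝ)
    (hD : D.PosDef) (hA : A.PosDef) (hP0 : P0.IsSymm) (hP1 : P1.IsSymm)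
    (x : Fin n → ℝ) (hx : x ≠ 0)
    (hA' : x ⬝ᵥ (Wtᵀ * P1 * Wt - Btᵀ * P0 * Bt) *ᵥ x > x ⬝ᵥ A *ᵥ x)
    (hD' : x ⬝ᵥ (Wtᵀ * P1 * Wt - Btᵀ * P0 * Bt) *ᵥ x > x ⬝ᵥ D *ᵥ x) :
    let qPt : ℝ := x ⬝ᵥ (Wtᵀ * P1 * Wt - Btᵀ * P0 * Bt) *ᵥ x
    let m11 : ℝ := x ⬝ᵥ (Wtᵀ * P1 * Wt) *ᵥ x
    let M : Matrix (Fin 2) (Fin 2) ℝ :=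
      !![m11, m11 - x ⬝ᵥ A *ᵥ x;
         x ⬝ᵥ (Btᵀ * P0 * Bt) *ᵥ x + x ⬝ᵥ D *ᵥ x,
         m11 + x ⬝ᵥ D *ᵥ x - x ⬝ᵥ A *ᵥ x]
    let β : ℝ := (x ⬝ᵥ A *ᵥ x) / qPt
    let γ : ℝ := 1 - (x ⬝ᵥ D *ᵥ x) / qPt
    let ys : Fin 2 → ℝ := ![1 - β, β]
    let zs : Fin 2 → ℝ := ![1 - γ, γ]
    ys ∈ Δ₂ ∧ zs ∈ Δ₂ ∧ IsMixedSaddle M ys zs ∧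
    payoff M ys zs = x ⬝ᵥ (Wtᵀ * P1 * Wt) *ᵥ x - x ⬝ᵥ A *ᵥ x +
      (x ⬝ᵥ D *ᵥ x) * (x ⬝ᵥ A *ᵥ x) / qPt :=
  stmt_14_general D A P0 P1 Bt Wt hD hA x hx hA' hD'
end
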